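/- arXiv:1010.1394 — 2 statements merged into one kernel-verified Lean document; each statement's English description precedes it below -/
import Mathlib

section
/- Let δ > 0, let R* be a δ-regular tree of cubes with root [0,1)^d, and let μ be a Borel probability measure on [0,1)^d. Then for μ-almost every x, lim_{n→∞} (1/n)·( log(1/ℓ(R_n(x))) − Σ_{i=0}^{n-1} λ(R_i(x)) ) = 0. -/
open MeasureTheory Filter Metric Set
open scoped ENNReal NNReal

/-- The unit cube `[0,1)^d`. -/
def unitCube (d : ℕ) : Set (EuclideanSpace ℝ (Fin d)) :=
  {x | ∀ j : Fin d, 0 ≤ x j ∧ x j < 1}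

/-- The half-open axis-parallel cube with corner `a` and side `l`. -/
def cubeSet {d : ℕ} (a : EuclideanSpace ℝ (Fin d)) (l : ℝ) : Set (EuclideanSpace ℝ (Fin d)) :=
  {y | ∀ j : Fin d, a j ≤ y j ∧ y j < a j + l}

/-- A `δ`-regular tree of half-open cubes with root `[0,1)^d`, encoded by the functions
`x ↦ R_n(x)` (given by a corner and a side length). At each level the cubes containing
points of the unit cube form a partition of their parent into finitely many cubes,
and all side ratios lie in `[δ, 1−δ]`. -/
structure CubeTree (d : ℕ) (δ : ℝ) where
  corner : ℕ → EuclideanSpace ℝ (Fin d) → EuclideanSpace ℝ (Fin d)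
  side : ℕ → EuclideanSpace ℝ (Fin d) → ℝ
  corner_zero : ∀ x ∈ unitCube d, corner 0 x = 0
  side_zero : ∀ x ∈ unitCube d, side 0 x = 1
  mem_node : ∀ n, ∀ x ∈ unitCube d, x ∈ cubeSet (corner n x) (side n x)
  side_pos : ∀ n, ∀ x ∈ unitCube d, 0 < side n x
  compat : ∀ n, ∀ x ∈ unitCube d, ∀ y ∈ unitCube d,
    y ∈ cubeSet (corner n x) (side n x) → corner n y = corner n x ∧ side n y = side n x
  nested : ∀ n, ∀ x ∈ unitCube d,
    cubeSet (corner (n + 1) x) (side (n + 1) x) ⊆ cubeSet (corner n x) (side n x)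
  regular : ∀ n, ∀ x ∈ unitCube d,
    δ ≤ side (n + 1) x / side n x ∧ side (n + 1) x / side n x ≤ 1 - δ
  finiteChildren : ∀ n, ∀ x ∈ unitCube d,
    Set.Finite {c : EuclideanSpace ℝ (Fin d) × ℝ |
      ∃ y ∈ unitCube d, y ∈ cubeSet (corner n x) (side n x) ∧
        c = (corner (n + 1) y, side (n + 1) y)}

/-- The cube `R_n(x)` of the tree, as a set. -/
def CubeTree.node {d : ℕ} {δ : ℝ} (T : CubeTree d δ) (n : ℕ)
    (x : EuclideanSpace ℝ (Fin d)) : Set (EuclideanSpace ℝ (Fin d)) :=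
  cubeSet (T.corner n x) (T.side n x)

/-- The offspring of the cube `R_n(x)`, as (corner, side) pairs. -/
def CubeTree.children {d : ℕ} {δ : ℝ} (T : CubeTree d δ) (n : ℕ)
    (x : EuclideanSpace ℝ (Fin d)) : Set (EuclideanSpace ℝ (Fin d) × ℝ) :=
  {c | ∃ y ∈ unitCube d, y ∈ T.node n x ∧ c = (T.corner (n + 1) y, T.side (n + 1) y)}

/-- The entropy `H(R_n(x)) = Σ_{R ∈ R(Q)} μ^Q(R)·log(1/μ^Q(R))` where `μ^Q(R) = μ(R)/μ(Q)`. -/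
noncomputable def treeEntropy {d : ℕ} {δ : ℝ} (μ : Measure (EuclideanSpace ℝ (Fin d)))
    (T : CubeTree d δ) (n : ℕ) (x : EuclideanSpace ℝ (Fin d)) : ℝ :=
  ∑ᶠ c ∈ T.children n x,
    Real.negMulLog ((μ (cubeSet c.1 c.2)).toReal / (μ (T.node n x)).toReal)

/-- The Lyapunov exponent `λ(R_n(x)) = Σ_{R ∈ R(Q)} μ^Q(R)·log(ℓ(Q)/ℓ(R))`. -/
noncomputable def treeLyap {d : ℕ} {δ : ℝ} (μ : Measure (EuclideanSpace ℝ (Fin d)))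
    (T : CubeTree d δ) (n : ℕ) (x : EuclideanSpace ℝ (Fin d)) : ℝ :=
  ∑ᶠ c ∈ T.children n x,
    ((μ (cubeSet c.1 c.2)).toReal / (μ (T.node n x)).toReal) * Real.log (T.side n x / c.2)

/-!
`T.deviation μ n x = log (1 / ℓ(R_n(x))) − Σ_{i<n} λ(R_i(x))` is a martingale along the tree:
on a cube `Q` its increment `log (ℓ(Q) / ℓ(R)) − λ(Q)` has `μ^Q`-mean zero by the very definition
of `λ(Q)`, and δ-regularity bounds it by `log (1 / δ)`. Orthogonality of the increments gives
`∫ deviation_n² dμ ≤ n log (1 / δ)²`, so by Chebyshev and Borel–Cantelli `deviation_{j²} / j² → 0`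
almost surely; the bounded increments interpolate between consecutive squares.
-/

open Topology

theorem Finset.sum_mul_add_sq_le {ι : Type*} (s : Finset ι) {w e : ι → ℝ} {a L : ℝ}
    (hw : ∀ i ∈ s, 0 ≤ w i) (he : ∀ i ∈ s, |e i| ≤ L) (hmean : ∑ i ∈ s, w i * e i = 0) :
    ∑ i ∈ s, w i * (a + e i) ^ 2 ≤ (∑ i ∈ s, w i) * (a ^ 2 + L ^ 2) := by
  have hexpand : ∑ i ∈ s, w i * (a + e i) ^ 2
      = (∑ i ∈ s, w i) * a ^ 2 + 2 * a * ∑ i ∈ s, w i * e i + ∑ i ∈ s, w i * e i ^ 2 := by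
    rw [Finset.sum_mul, Finset.mul_sum, ← Finset.sum_add_distrib, ← Finset.sum_add_distrib]
    exact Finset.sum_congr rfl fun i _ => by ring
  have hsq : ∑ i ∈ s, w i * e i ^ 2 ≤ (∑ i ∈ s, w i) * L ^ 2 := by
    rw [Finset.sum_mul]
    exact Finset.sum_le_sum fun i hi => mul_le_mul_of_nonneg_left
      (sq_le_sq' (neg_le_of_abs_le (he i hi)) (le_of_abs_le (he i hi))) (hw i hi)
  rw [hexpand, hmean, mul_zero, add_zero, mul_add]
  linarith

theorem Finset.sum_mul_sub_weighted_mean_eq_zero {ι : Type*} (s : Finset ι) {w : ι → ℝ}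
    (a : ι → ℝ) (hw : ∀ i ∈ s, 0 ≤ w i) :
    ∑ i ∈ s, w i * (a i - ∑ j ∈ s, w j / (∑ k ∈ s, w k) * a j) = 0 := by
  rcases eq_or_ne (∑ k ∈ s, w k) 0 with hW | hW
  · have hzero := (Finset.sum_eq_zero_iff_of_nonneg hw).1 hW
    exact Finset.sum_eq_zero fun i hi => by rw [hzero i hi, zero_mul]
  · simp only [mul_sub, Finset.sum_sub_distrib, ← Finset.sum_mul, div_mul_eq_mul_div,
      ← Finset.sum_div]
    rw [mul_div_cancel₀ _ hW, sub_self]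

theorem ae_tendsto_zero_of_tsum_measure_ne_top {Ω : Type*} [MeasurableSpace Ω] {μ : Measure Ω}
    {g : ℕ → Ω → ℝ} (h : ∀ ε > 0, ∑' j, μ {x | ε ≤ |g j x|} ≠ ∞) :
    ∀ᵐ x ∂μ, Tendsto (fun j => g j x) atTop (𝓝 0) := by
  have hk : ∀ᵐ x ∂μ, ∀ k : ℕ, ∀ᶠ j in atTop, |g j x| < 1 / ((k : ℝ) + 1) :=
    ae_all_iff.2 fun k => (ae_eventually_notMem (h _ Nat.one_div_pos_of_nat)).mono
      fun x hx => hx.mono fun j hj => not_le.1 hj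
  filter_upwards [hk] with x hx
  refine Metric.tendsto_nhds.2 fun ε hε => ?_
  obtain ⟨k, hkε⟩ := exists_nat_one_div_lt hε
  filter_upwards [hx k] with j hj
  rw [Real.dist_eq, sub_zero]
  exact hj.trans hkε

theorem abs_sub_le_mul_of_abs_succ_sub_le {G : ℕ → ℝ} {L : ℝ} (hG : ∀ n, |G (n + 1) - G n| ≤ L)
    {m n : ℕ} (hmn : m ≤ n) : |G n - G m| ≤ ((n : ℝ) - m) * L := by
  calc |G n - G m| = dist (G m) (G n) := by rw [Real.dist_eq, abs_sub_comm]
    _ ≤ ∑ i ∈ Finset.Ico m n, dist (G i) (G (i + 1)) := dist_le_Ico_sum_dist G hmn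
    _ ≤ (Finset.Ico m n).card • L :=
        Finset.sum_le_card_nsmul _ _ _ fun i _ => by rw [Real.dist_eq, abs_sub_comm]; exact hG i
    _ = ((n : ℝ) - m) * L := by rw [Nat.card_Ico, nsmul_eq_mul, Nat.cast_sub hmn]

theorem tendsto_div_of_tendsto_div_sq {G : ℕ → ℝ} {L : ℝ} (hG : ∀ n, |G (n + 1) - G n| ≤ L)
    (hsq : Tendsto (fun j : ℕ => G (j ^ 2) / (j : ℝ) ^ 2) atTop (𝓝 0)) :
    Tendsto (fun n : ℕ => G n / n) atTop (𝓝 0) := by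
  have hsqrt : Tendsto Nat.sqrt atTop atTop :=
    tendsto_atTop_atTop.2 fun b => ⟨b * b, fun n hn => Nat.le_sqrt.2 hn⟩
  have hbound : ∀ᶠ n : ℕ in atTop,
      ‖G n / n‖ ≤ |G (n.sqrt ^ 2) / (n.sqrt : ℝ) ^ 2| + 2 * L / n.sqrt := by
    filter_upwards [eventually_ge_atTop 1] with n hn
    have hL : 0 ≤ L := (abs_nonneg _).trans (hG 0)
    have hle := Nat.sqrt_le_add n
    rw [← sq] at hle
    set s := n.sqrt
    have hs : (1 : ℝ) ≤ s := by exact_mod_cast Nat.le_sqrt.2 hn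
    have hsn : ((s ^ 2 : ℕ) : ℝ) ≤ n := by exact_mod_cast Nat.sqrt_le' n
    have hns : (n : ℝ) ≤ s ^ 2 + 2 * s := by
      exact_mod_cast (by omega : n ≤ s ^ 2 + 2 * s)
    have hstep := abs_sub_le_mul_of_abs_succ_sub_le hG (Nat.sqrt_le' n)
    push_cast at hsn hstep
    have hGn : |G n| ≤ |G (s ^ 2)| + 2 * s * L := by
      have := abs_sub_abs_le_abs_sub (G n) (G (s ^ 2))
      nlinarith
    rw [Real.norm_eq_abs, abs_div, abs_div, Nat.abs_cast,
      abs_of_pos (by positivity : (0 : ℝ) < s ^ 2)]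
    calc |G n| / n ≤ (|G (s ^ 2)| + 2 * s * L) / s ^ 2 :=
          div_le_div₀ (by positivity) hGn (by positivity) hsn
      _ = |G (s ^ 2)| / s ^ 2 + 2 * L / s := by field_simp
  have hlim : Tendsto (fun n : ℕ => |G (n.sqrt ^ 2) / (n.sqrt : ℝ) ^ 2| + 2 * L / n.sqrt)
      atTop (𝓝 0) := by
    simpa using (hsq.comp hsqrt).abs.add
      ((tendsto_const_div_atTop_nhds_zero_nat (2 * L)).comp hsqrt)
  exact squeeze_zero_norm' hbound hlim

theorem unitCube_eq_cubeSet (d : ℕ) : unitCube d = cubeSet 0 1 := by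
  ext x
  simp [unitCube, cubeSet]

theorem measurableSet_cubeSet {d : ℕ} (a : EuclideanSpace ℝ (Fin d)) (l : ℝ) :
    MeasurableSet (cubeSet a l) := by
  have hcube : cubeSet a l
      = ⋂ j, (fun y : EuclideanSpace ℝ (Fin d) => y j) ⁻¹' Ico (a j) (a j + l) := by
    ext y
    simp [cubeSet]
  rw [hcube]
  exact .iInter fun j => measurableSet_Ico.preimage (by fun_prop)

theorem measurableSet_unitCube (d : ℕ) : MeasurableSet (unitCube d) :=
  unitCube_eq_cubeSet d ▸ measurableSet_cubeSet 0 1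

namespace CubeTree

variable {d : ℕ} {δ : ℝ} (T : CubeTree d δ)

/-- The cube `R_n(x)`, encoded by its corner and side length. -/
def cell (n : ℕ) (x : EuclideanSpace ℝ (Fin d)) : EuclideanSpace ℝ (Fin d) × ℝ :=
  (T.corner n x, T.side n x)

def level (n : ℕ) : Set (EuclideanSpace ℝ (Fin d) × ℝ) :=
  T.cell n '' unitCube d

def childrenOf (n : ℕ) (c : EuclideanSpace ℝ (Fin d) × ℝ) :
    Set (EuclideanSpace ℝ (Fin d) × ℝ) :=
  {c' | ∃ y ∈ unitCube d, y ∈ cubeSet c.1 c.2 ∧ c' = T.cell (n + 1) y}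

variable {T} {n : ℕ} {x z : EuclideanSpace ℝ (Fin d)} {c c' : EuclideanSpace ℝ (Fin d) × ℝ}

theorem cell_mem_level (hx : x ∈ unitCube d) : T.cell n x ∈ T.level n :=
  mem_image_of_mem _ hx

theorem mem_cubeSet_cell (hx : x ∈ unitCube d) : x ∈ cubeSet (T.cell n x).1 (T.cell n x).2 :=
  T.mem_node n x hx

theorem cell_eq_of_mem_cubeSet (hc : c ∈ T.level n) (hz : z ∈ unitCube d)
    (hzc : z ∈ cubeSet c.1 c.2) : T.cell n z = c := by
  obtain ⟨y, hy, rfl⟩ := hc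
  obtain ⟨hcorner, hside⟩ := T.compat n y hy z hz hzc
  exact Prod.ext hcorner hside

theorem cell_succ_mem_childrenOf (hx : x ∈ unitCube d) :
    T.cell (n + 1) x ∈ T.childrenOf n (T.cell n x) :=
  ⟨x, hx, mem_cubeSet_cell hx, rfl⟩

theorem mem_level_of_mem_childrenOf (h : c' ∈ T.childrenOf n c) : c' ∈ T.level (n + 1) := by
  obtain ⟨y, hy, -, rfl⟩ := h
  exact cell_mem_level hy

theorem exists_cell_eq_of_mem_childrenOf (hc : c ∈ T.level n) (h : c' ∈ T.childrenOf n c) :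
    ∃ y ∈ unitCube d, T.cell n y = c ∧ T.cell (n + 1) y = c' := by
  obtain ⟨y, hy, hyc, rfl⟩ := h
  exact ⟨y, hy, cell_eq_of_mem_cubeSet hc hy hyc, rfl⟩

theorem cubeSet_subset_of_mem_childrenOf (hc : c ∈ T.level n) (h : c' ∈ T.childrenOf n c) :
    cubeSet c'.1 c'.2 ⊆ cubeSet c.1 c.2 := by
  obtain ⟨y, hy, rfl, rfl⟩ := exists_cell_eq_of_mem_childrenOf hc h
  exact T.nested n y hy

theorem level_succ (n : ℕ) : T.level (n + 1) = ⋃ c ∈ T.level n, T.childrenOf n c := by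
  ext c'
  simp only [mem_iUnion₂, exists_prop]
  constructor
  · rintro ⟨y, hy, rfl⟩
    exact ⟨_, cell_mem_level hy, cell_succ_mem_childrenOf hy⟩
  · rintro ⟨c, -, hc'⟩
    exact mem_level_of_mem_childrenOf hc'

theorem finite_level (n : ℕ) : (T.level n).Finite := by
  induction n with
  | zero =>
    refine (finite_singleton ((0 : EuclideanSpace ℝ (Fin d)), (1 : ℝ))).subset ?_
    rintro c ⟨y, hy, rfl⟩
    simp [cell, T.corner_zero y hy, T.side_zero y hy]
  | succ n ih =>
    rw [level_succ]
    refine ih.biUnion fun c hc => ?_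
    obtain ⟨y, hy, rfl⟩ := hc
    exact T.finiteChildren n y hy

theorem log_side_div_side_succ_mem_Icc (hδ : 0 < δ) (hx : x ∈ unitCube d) (n : ℕ) :
    Real.log (T.side n x / T.side (n + 1) x) ∈ Icc 0 (Real.log (1 / δ)) := by
  obtain ⟨hlow, hup⟩ := T.regular n x hx
  have hpos : 0 < T.side (n + 1) x / T.side n x := hδ.trans_le hlow
  rw [mem_Icc, ← inv_div, Real.log_inv, one_div, Real.log_inv, neg_le_neg_iff, neg_nonneg]
  exact ⟨Real.log_nonpos hpos.le (hup.trans (by linarith)), Real.log_le_log hδ hlow⟩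

theorem log_side_div_mem_Icc_of_mem_childrenOf (hδ : 0 < δ) (hc : c ∈ T.level n)
    (h : c' ∈ T.childrenOf n c) : Real.log (c.2 / c'.2) ∈ Icc 0 (Real.log (1 / δ)) := by
  obtain ⟨y, hy, rfl, rfl⟩ := exists_cell_eq_of_mem_childrenOf hc h
  exact log_side_div_side_succ_mem_Icc hδ hy n

variable (T) in
noncomputable def levelFinset (n : ℕ) : Finset (EuclideanSpace ℝ (Fin d) × ℝ) :=
  (T.finite_level n).toFinset

variable (T) in
open Classical in
noncomputable def childFinset (n : ℕ) (c : EuclideanSpace ℝ (Fin d) × ℝ) :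
    Finset (EuclideanSpace ℝ (Fin d) × ℝ) :=
  (T.levelFinset (n + 1)).filter (· ∈ T.childrenOf n c)

theorem mem_levelFinset : c ∈ T.levelFinset n ↔ c ∈ T.level n :=
  Finite.mem_toFinset _

theorem mem_childFinset : c' ∈ T.childFinset n c ↔ c' ∈ T.childrenOf n c := by
  simp only [childFinset, Finset.mem_filter, mem_levelFinset]
  exact and_iff_right_of_imp mem_level_of_mem_childrenOf

theorem coe_childFinset : (T.childFinset n c : Set _) = T.childrenOf n c :=
  Set.ext fun _ => mem_childFinset

theorem levelFinset_succ (n : ℕ) :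
    T.levelFinset (n + 1) = (T.levelFinset n).biUnion (T.childFinset n) := by
  ext c'
  simp only [Finset.mem_biUnion, mem_levelFinset, mem_childFinset, level_succ, mem_iUnion₂,
    exists_prop]

theorem pairwiseDisjoint_childFinset (n : ℕ) :
    (T.levelFinset n : Set (EuclideanSpace ℝ (Fin d) × ℝ)).PairwiseDisjoint (T.childFinset n) := by
  intro c₁ h₁ c₂ h₂ hne
  refine Finset.disjoint_left.2 fun c' hc'₁ hc'₂ => hne ?_
  obtain ⟨y, hy, hyc, rfl⟩ :=
    exists_cell_eq_of_mem_childrenOf (mem_levelFinset.1 h₁) (mem_childFinset.1 hc'₁)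
  rw [← hyc]
  exact cell_eq_of_mem_cubeSet (mem_levelFinset.1 h₂) hy
    (cubeSet_subset_of_mem_childrenOf (mem_levelFinset.1 h₂) (mem_childFinset.1 hc'₂)
      (mem_cubeSet_cell hy))

variable {μ : Measure (EuclideanSpace ℝ (Fin d))} {y : EuclideanSpace ℝ (Fin d)}

section Lyapunov

variable (T) in
noncomputable def lyapunov (μ : Measure (EuclideanSpace ℝ (Fin d))) (n : ℕ)
    (c : EuclideanSpace ℝ (Fin d) × ℝ) : ℝ :=
  ∑ᶠ c' ∈ T.childrenOf n c,
    (μ (cubeSet c'.1 c'.2)).toReal / (μ (cubeSet c.1 c.2)).toReal * Real.log (c.2 / c'.2)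

theorem treeLyap_eq_lyapunov : treeLyap μ T n x = T.lyapunov μ n (T.cell n x) := rfl

theorem lyapunov_eq_sum : T.lyapunov μ n c = ∑ c' ∈ T.childFinset n c,
    μ.real (cubeSet c'.1 c'.2) / μ.real (cubeSet c.1 c.2) * Real.log (c.2 / c'.2) := by
  rw [lyapunov, ← coe_childFinset, finsum_mem_coe_finset]
  rfl

variable [IsFiniteMeasure μ] (hμ : μ (unitCube d)ᶜ = 0)
include hμ

theorem sum_measureReal_eq_of_cover {s : Finset (EuclideanSpace ℝ (Fin d) × ℝ)}
    (hs : ∀ c ∈ s, c ∈ T.level n) {A : Set (EuclideanSpace ℝ (Fin d))}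
    (hA : A ∩ unitCube d = ⋃ c ∈ s, cubeSet c.1 c.2 ∩ unitCube d) :
    ∑ c ∈ s, μ.real (cubeSet c.1 c.2) = μ.real A := by
  have hdisj : (s : Set (EuclideanSpace ℝ (Fin d) × ℝ)).PairwiseDisjoint
      fun c : EuclideanSpace ℝ (Fin d) × ℝ => cubeSet c.1 c.2 ∩ unitCube d := by
    intro c₁ h₁ c₂ h₂ hne
    refine Set.disjoint_left.2 fun z hz₁ hz₂ => hne ?_
    rw [← cell_eq_of_mem_cubeSet (hs c₁ h₁) hz₁.2 hz₁.1,
      cell_eq_of_mem_cubeSet (hs c₂ h₂) hz₂.2 hz₂.1]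
  have hinter (B : Set (EuclideanSpace ℝ (Fin d))) : μ.real (B ∩ unitCube d) = μ.real B := by
    rw [measureReal_def, measure_inter_conull hμ, measureReal_def]
  calc ∑ c ∈ s, μ.real (cubeSet c.1 c.2)
      = ∑ c ∈ s, μ.real (cubeSet c.1 c.2 ∩ unitCube d) := by simp only [hinter]
    _ = μ.real (⋃ c ∈ s, cubeSet c.1 c.2 ∩ unitCube d) :=
        (measureReal_biUnion_finset hdisj fun c _ =>
          (measurableSet_cubeSet _ _).inter (measurableSet_unitCube d)).symm
    _ = μ.real A := by rw [← hA, hinter]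

theorem sum_measureReal_childFinset (hc : c ∈ T.level n) :
    ∑ c' ∈ T.childFinset n c, μ.real (cubeSet c'.1 c'.2) = μ.real (cubeSet c.1 c.2) := by
  refine sum_measureReal_eq_of_cover hμ
    (fun c' h => mem_level_of_mem_childrenOf (mem_childFinset.1 h)) ?_
  ext z
  simp only [mem_inter_iff, mem_iUnion₂, mem_childFinset, exists_prop]
  constructor
  · rintro ⟨hzc, hz⟩
    exact ⟨_, ⟨z, hz, hzc, rfl⟩, mem_cubeSet_cell hz, hz⟩
  · rintro ⟨c', hc', hzc', hz⟩
    exact ⟨cubeSet_subset_of_mem_childrenOf hc hc' hzc', hz⟩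

theorem sum_measureReal_levelFinset (n : ℕ) :
    ∑ c ∈ T.levelFinset n, μ.real (cubeSet c.1 c.2) = μ.real univ := by
  refine sum_measureReal_eq_of_cover hμ (fun c h => mem_levelFinset.1 h) ?_
  ext z
  simp only [univ_inter, mem_inter_iff, mem_iUnion₂, mem_levelFinset, exists_prop]
  exact ⟨fun hz => ⟨_, cell_mem_level hz, mem_cubeSet_cell hz, hz⟩, fun ⟨_, _, _, hz⟩ => hz⟩

theorem sum_mul_log_sub_lyapunov_eq_zero (hc : c ∈ T.level n) :
    ∑ c' ∈ T.childFinset n c,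
      μ.real (cubeSet c'.1 c'.2) * (Real.log (c.2 / c'.2) - T.lyapunov μ n c) = 0 := by
  rw [lyapunov_eq_sum, ← sum_measureReal_childFinset hμ hc]
  exact Finset.sum_mul_sub_weighted_mean_eq_zero _ _ fun _ _ => measureReal_nonneg

theorem lyapunov_mem_Icc (hδ : 0 < δ) (hc : c ∈ T.level n) :
    T.lyapunov μ n c ∈ Icc 0 (Real.log (1 / δ)) := by
  have hlog (c') (h : c' ∈ T.childFinset n c) :=
    log_side_div_mem_Icc_of_mem_childrenOf hδ hc (mem_childFinset.1 h)
  have hw (c' : EuclideanSpace ℝ (Fin d) × ℝ) :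
      0 ≤ μ.real (cubeSet c'.1 c'.2) / μ.real (cubeSet c.1 c.2) :=
    div_nonneg measureReal_nonneg measureReal_nonneg
  have hL : 0 ≤ Real.log (1 / δ) := by
    obtain ⟨y, hy, rfl⟩ := hc
    exact nonempty_Icc.1 ⟨_, log_side_div_side_succ_mem_Icc (T := T) hδ hy n⟩
  have hsum : ∑ c' ∈ T.childFinset n c,
      μ.real (cubeSet c'.1 c'.2) / μ.real (cubeSet c.1 c.2) ≤ 1 := by
    rw [← Finset.sum_div, sum_measureReal_childFinset hμ hc]
    exact div_self_le_one _
  rw [lyapunov_eq_sum, mem_Icc]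
  constructor
  · exact Finset.sum_nonneg fun c' h => mul_nonneg (hw c') (hlog c' h).1
  · calc _ ≤ ∑ c' ∈ T.childFinset n c,
          μ.real (cubeSet c'.1 c'.2) / μ.real (cubeSet c.1 c.2) * Real.log (1 / δ) :=
          Finset.sum_le_sum fun c' h => mul_le_mul_of_nonneg_left (hlog c' h).2 (hw c')
      _ ≤ Real.log (1 / δ) := by rw [← Finset.sum_mul]; exact mul_le_of_le_one_left hL hsum

theorem abs_log_side_div_sub_lyapunov_le (hδ : 0 < δ) (hc : c ∈ T.level n)
    (h : c' ∈ T.childrenOf n c) :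
    |Real.log (c.2 / c'.2) - T.lyapunov μ n c| ≤ Real.log (1 / δ) :=
  abs_sub_le_of_nonneg_of_le (log_side_div_mem_Icc_of_mem_childrenOf hδ hc h).1
    (log_side_div_mem_Icc_of_mem_childrenOf hδ hc h).2 (lyapunov_mem_Icc hμ hδ hc).1
    (lyapunov_mem_Icc hμ hδ hc).2

end Lyapunov

section Deviation

variable (T) in
noncomputable def deviation (μ : Measure (EuclideanSpace ℝ (Fin d))) (n : ℕ)
    (x : EuclideanSpace ℝ (Fin d)) : ℝ :=
  Real.log (1 / T.side n x) - ∑ i ∈ Finset.range n, treeLyap μ T i x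

theorem deviation_zero (hx : x ∈ unitCube d) : T.deviation μ 0 x = 0 := by
  simp [deviation, T.side_zero x hx]

theorem deviation_succ (hx : x ∈ unitCube d) (n : ℕ) :
    T.deviation μ (n + 1) x
      = T.deviation μ n x + (Real.log (T.side n x / T.side (n + 1) x) - treeLyap μ T n x) := by
  rw [deviation, deviation, Finset.sum_range_succ,
    Real.log_div (T.side_pos n x hx).ne' (T.side_pos (n + 1) x hx).ne', one_div, one_div,
    Real.log_inv, Real.log_inv]
  ring

theorem abs_deviation_succ_sub_le [IsFiniteMeasure μ] (hμ : μ (unitCube d)ᶜ = 0) (hδ : 0 < δ)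
    (hx : x ∈ unitCube d) (n : ℕ) :
    |T.deviation μ (n + 1) x - T.deviation μ n x| ≤ Real.log (1 / δ) := by
  rw [deviation_succ hx, add_sub_cancel_left]
  exact abs_log_side_div_sub_lyapunov_le hμ hδ (cell_mem_level hx) (cell_succ_mem_childrenOf hx)

theorem cubeSet_cell_subset (hx : x ∈ unitCube d) {m n : ℕ} (hmn : m ≤ n) :
    cubeSet (T.cell n x).1 (T.cell n x).2 ⊆ cubeSet (T.cell m x).1 (T.cell m x).2 := by
  induction n, hmn using Nat.le_induction with
  | base => exact subset_rfl
  | succ n _ ih => exact (T.nested n x hx).trans ih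

theorem cell_eq_cell_of_le (hx : x ∈ unitCube d) (hy : y ∈ unitCube d) {m n : ℕ} (hmn : m ≤ n)
    (h : T.cell n x = T.cell n y) : T.cell m x = T.cell m y := by
  refine (cell_eq_of_mem_cubeSet (cell_mem_level hx) hy (cubeSet_cell_subset hx hmn ?_)).symm
  rw [h]
  exact mem_cubeSet_cell hy

theorem deviation_congr (hx : x ∈ unitCube d) (hy : y ∈ unitCube d)
    (h : T.cell n x = T.cell n y) : T.deviation μ n x = T.deviation μ n y := by
  have hside : T.side n x = T.side n y := congrArg Prod.snd h
  simp only [deviation, hside, treeLyap_eq_lyapunov]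
  congr 1
  exact Finset.sum_congr rfl fun i hi => by
    rw [cell_eq_cell_of_le hx hy (Finset.mem_range.1 hi).le h]

variable (T) in
/-- A point of the unit cube in the level-`n` cube `c`; junk unless `c ∈ T.level n`. -/
noncomputable def representative (n : ℕ) (c : EuclideanSpace ℝ (Fin d) × ℝ) :
    EuclideanSpace ℝ (Fin d) :=
  Function.invFunOn (T.cell n) (unitCube d) c

theorem representative_mem (hc : c ∈ T.level n) : T.representative n c ∈ unitCube d :=
  Function.invFunOn_mem hc

theorem cell_representative (hc : c ∈ T.level n) : T.cell n (T.representative n c) = c :=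
  Function.invFunOn_eq hc

theorem deviation_representative_cell (hx : x ∈ unitCube d) :
    T.deviation μ n (T.representative n (T.cell n x)) = T.deviation μ n x :=
  deviation_congr (representative_mem (cell_mem_level hx)) hx
    (cell_representative (cell_mem_level hx))

theorem deviation_succ_representative (hc : c ∈ T.level n) (h : c' ∈ T.childrenOf n c) :
    T.deviation μ (n + 1) (T.representative (n + 1) c')
      = T.deviation μ n (T.representative n c) + (Real.log (c.2 / c'.2) - T.lyapunov μ n c) := by
  have hc' := mem_level_of_mem_childrenOf h
  set z := T.representative (n + 1) c'
  have hz : z ∈ unitCube d := representative_mem hc'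
  have hzc' : T.cell (n + 1) z = c' := cell_representative hc'
  have hzc : T.cell n z = c := by
    refine cell_eq_of_mem_cubeSet hc hz (cubeSet_subset_of_mem_childrenOf hc h ?_)
    rw [← hzc']
    exact mem_cubeSet_cell hz
  rw [deviation_succ hz, ← hzc, deviation_representative_cell hz, ← hzc']
  rfl

end Deviation

section SecondMoment

variable (T) in
/-- `∫ (T.deviation μ n)² ∂μ`, computed cube by cube: the deviation is constant on each
level-`n` cube, and this finite sum needs no measurability of the tree. -/
noncomputable def secondMoment (μ : Measure (EuclideanSpace ℝ (Fin d))) (n : ℕ) : ℝ :=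
  ∑ c ∈ T.levelFinset n, μ.real (cubeSet c.1 c.2) * T.deviation μ n (T.representative n c) ^ 2

theorem secondMoment_zero : T.secondMoment μ 0 = 0 :=
  Finset.sum_eq_zero fun c hc => by
    rw [deviation_zero (representative_mem (mem_levelFinset.1 hc))]
    ring

variable [IsFiniteMeasure μ] (hμ : μ (unitCube d)ᶜ = 0) (hδ : 0 < δ)
include hμ hδ

theorem secondMoment_succ_le (n : ℕ) :
    T.secondMoment μ (n + 1) ≤ T.secondMoment μ n + μ.real univ * Real.log (1 / δ) ^ 2 := by
  have hcube (c) (hc : c ∈ T.levelFinset n) :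
      ∑ c' ∈ T.childFinset n c,
        μ.real (cubeSet c'.1 c'.2) * T.deviation μ (n + 1) (T.representative (n + 1) c') ^ 2
      ≤ μ.real (cubeSet c.1 c.2)
          * (T.deviation μ n (T.representative n c) ^ 2 + Real.log (1 / δ) ^ 2) := by
    rw [mem_levelFinset] at hc
    rw [← sum_measureReal_childFinset hμ hc, Finset.sum_congr rfl fun c' h => by
      rw [deviation_succ_representative hc (mem_childFinset.1 h)]]
    exact Finset.sum_mul_add_sq_le _ (fun _ _ => measureReal_nonneg)
      (fun c' h => abs_log_side_div_sub_lyapunov_le hμ hδ hc (mem_childFinset.1 h))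
      (sum_mul_log_sub_lyapunov_eq_zero hμ hc)
  calc T.secondMoment μ (n + 1)
      = ∑ c ∈ T.levelFinset n, ∑ c' ∈ T.childFinset n c,
          μ.real (cubeSet c'.1 c'.2) * T.deviation μ (n + 1) (T.representative (n + 1) c') ^ 2 := by
        rw [secondMoment, levelFinset_succ, Finset.sum_biUnion (pairwiseDisjoint_childFinset n)]
    _ ≤ ∑ c ∈ T.levelFinset n, μ.real (cubeSet c.1 c.2)
          * (T.deviation μ n (T.representative n c) ^ 2 + Real.log (1 / δ) ^ 2) :=
        Finset.sum_le_sum hcube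
    _ = T.secondMoment μ n + μ.real univ * Real.log (1 / δ) ^ 2 := by
        rw [← sum_measureReal_levelFinset hμ n, Finset.sum_mul, secondMoment,
          ← Finset.sum_add_distrib]
        simp only [mul_add]

theorem secondMoment_le (n : ℕ) :
    T.secondMoment μ n ≤ n * (μ.real univ * Real.log (1 / δ) ^ 2) := by
  induction n with
  | zero => simp [secondMoment_zero]
  | succ n ih =>
    push_cast
    linarith [secondMoment_succ_le (T := T) hμ hδ n]

omit hδ in
theorem measure_le_abs_deviation_le (n : ℕ) {t : ℝ} (ht : 0 < t) :
    μ {x | t ≤ |T.deviation μ n x|} ≤ ENNReal.ofReal (T.secondMoment μ n / t ^ 2) := by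
  classical
  set B := (T.levelFinset n).filter fun c => t ≤ |T.deviation μ n (T.representative n c)|
  have hcover : {x | t ≤ |T.deviation μ n x|} ∩ unitCube d ⊆ ⋃ c ∈ B, cubeSet c.1 c.2 := by
    rintro x ⟨hxt, hx⟩
    refine mem_biUnion (Finset.mem_filter.2 ⟨mem_levelFinset.2 (cell_mem_level hx), ?_⟩)
      (mem_cubeSet_cell hx)
    rwa [deviation_representative_cell hx]
  have hB : ∑ c ∈ B, μ.real (cubeSet c.1 c.2) ≤ T.secondMoment μ n / t ^ 2 := by
    rw [secondMoment, Finset.sum_div]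
    calc ∑ c ∈ B, μ.real (cubeSet c.1 c.2)
        ≤ ∑ c ∈ B, μ.real (cubeSet c.1 c.2)
            * T.deviation μ n (T.representative n c) ^ 2 / t ^ 2 := by
          refine Finset.sum_le_sum fun c hc => ?_
          have hsq : t ^ 2 ≤ T.deviation μ n (T.representative n c) ^ 2 := by
            rw [← sq_abs (T.deviation μ n _)]
            exact pow_le_pow_left₀ ht.le (Finset.mem_filter.1 hc).2 2
          rw [mul_div_assoc]
          exact le_mul_of_one_le_right measureReal_nonneg ((one_le_div (by positivity)).2 hsq)
      _ ≤ _ := Finset.sum_le_sum_of_subset_of_nonneg (Finset.filter_subset _ _)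
          fun _ _ _ => by positivity
  calc μ {x | t ≤ |T.deviation μ n x|}
      = μ ({x | t ≤ |T.deviation μ n x|} ∩ unitCube d) := (measure_inter_conull hμ).symm
    _ ≤ ∑ c ∈ B, μ (cubeSet c.1 c.2) := (measure_mono hcover).trans (measure_biUnion_finset_le _ _)
    _ = ENNReal.ofReal (∑ c ∈ B, μ.real (cubeSet c.1 c.2)) := by
        rw [ENNReal.ofReal_sum_of_nonneg fun _ _ => measureReal_nonneg]
        exact Finset.sum_congr rfl fun c _ => by rw [ofReal_measureReal]
    _ ≤ ENNReal.ofReal (T.secondMoment μ n / t ^ 2) := ENNReal.ofReal_le_ofReal hB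

theorem tsum_measure_le_abs_deviation_sq_div_ne_top {ε : ℝ} (hε : 0 < ε) :
    ∑' j : ℕ, μ {x | ε ≤ |T.deviation μ (j ^ 2) x / (j : ℝ) ^ 2|} ≠ ∞ := by
  set C := μ.real univ * Real.log (1 / δ) ^ 2 / ε ^ 2 with hC
  have hterm (j : ℕ) : μ {x | ε ≤ |T.deviation μ (j ^ 2) x / (j : ℝ) ^ 2|}
      ≤ ENNReal.ofReal (C * (1 / (j : ℝ) ^ 2)) := by
    rcases j.eq_zero_or_pos with rfl | hj
    · simp [hε.not_ge]
    have hj2 : (0 : ℝ) < (j : ℝ) ^ 2 := by positivity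
    have hset : {x | ε ≤ |T.deviation μ (j ^ 2) x / (j : ℝ) ^ 2|}
        = {x | ε * (j : ℝ) ^ 2 ≤ |T.deviation μ (j ^ 2) x|} := by
      ext x
      simp only [mem_ofPred_eq, abs_div, abs_of_pos hj2, le_div_iff₀ hj2]
    rw [hset]
    refine (measure_le_abs_deviation_le hμ _ (by positivity)).trans (ENNReal.ofReal_le_ofReal ?_)
    have hV := secondMoment_le (T := T) hμ hδ (j ^ 2)
    push_cast at hV
    calc T.secondMoment μ (j ^ 2) / (ε * (j : ℝ) ^ 2) ^ 2
        ≤ (j : ℝ) ^ 2 * (μ.real univ * Real.log (1 / δ) ^ 2) / (ε * (j : ℝ) ^ 2) ^ 2 := by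
          gcongr
      _ = C * (1 / (j : ℝ) ^ 2) := by rw [hC]; field_simp
  have hsum : Summable fun j : ℕ => C * (1 / (j : ℝ) ^ 2) :=
    (Real.summable_one_div_nat_pow.2 one_lt_two).mul_left C
  refine ne_top_of_le_ne_top ?_ (ENNReal.tsum_le_tsum hterm)
  rw [← ENNReal.ofReal_tsum_of_nonneg (fun j => by positivity) hsum]
  exact ENNReal.ofReal_ne_top

end SecondMoment

end CubeTree

theorem tree_lyapunov_lln_general (d : ℕ) (δ : ℝ) (hδ : 0 < δ)
    (T : CubeTree d δ) (μ : Measure (EuclideanSpace ℝ (Fin d))) [IsProbabilityMeasure μ]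
    (hsupp : μ (unitCube d) = 1) :
    ∀ᵐ x ∂μ, Filter.Tendsto (fun n : ℕ =>
      (1 / (n : ℝ)) * (Real.log (1 / T.side n x)
        - ∑ i ∈ Finset.range n, treeLyap μ T i x))
      Filter.atTop (nhds 0) := by
  have hμ : μ (unitCube d)ᶜ = 0 := (prob_compl_eq_zero_iff (measurableSet_unitCube d)).2 hsupp
  have hsq : ∀ᵐ x ∂μ, Tendsto (fun j : ℕ => T.deviation μ (j ^ 2) x / (j : ℝ) ^ 2) atTop (𝓝 0) :=
    ae_tendsto_zero_of_tsum_measure_ne_top fun _ hε =>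
      CubeTree.tsum_measure_le_abs_deviation_sq_div_ne_top hμ hδ hε
  filter_upwards [mem_ae_iff.2 hμ, hsq] with x hx hxsq
  simpa only [one_div_mul_eq_div] using
    tendsto_div_of_tendsto_div_sq (CubeTree.abs_deviation_succ_sub_le hμ hδ hx) hxsq

/-- For a `δ`-regular tree of cubes `R*` with root `[0,1)^d` and a Borel
probability measure `μ` on `[0,1)^d`, for `μ`-a.e. `x`,
`(1/n)·(log(1/ℓ(R_n(x))) − Σ_{i<n} λ(R_i(x))) → 0`. -/
theorem tree_lyapunov_lln (d : ℕ) (hd : 1 ≤ d) (δ : ℝ) (hδ : 0 < δ)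
    (T : CubeTree d δ) (μ : Measure (EuclideanSpace ℝ (Fin d))) [IsProbabilityMeasure μ]
    (hsupp : μ (unitCube d) = 1) :
    ∀ᵐ x ∂μ, Filter.Tendsto (fun n : ℕ =>
      (1 / (n : ℝ)) * (Real.log (1 / T.side n x)
        - ∑ i ∈ Finset.range n, treeLyap μ T i x))
      Filter.atTop (nhds 0) :=
  tree_lyapunov_lln_general d δ hδ T μ hsupp
end

section
/- Let d, k ≥ 1 be integers, L = 2^d−1, ψ(t) = t·log(1/t), and fix p ∈ [0, 2^{-k}]. Define Δ_p = { (q_1,…,q_k) : q_i ≥ 0 for all i, L·Σ_{i=1}^k q_i = 1−p } and, for q ∈ Δ_p, g_p(q) = ( L·Σ_{i=1}^k ψ(q_i) + ψ(p) ) / ( L·Σ_{i=1}^k q_i·log(2^i) + p·log(2^k) ). Then the global maximum M of g_p on Δ_p is attained at the point q_i = A·2^{-M·i} (i = 1,…,k), where A > 0 is determined by the requirement L·Σ_{i=1}^k A·2^{-M·i} = 1−p. -/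
/-!
Dinkelbach's reduction: writing `g_p = N / D`, the maximum of `g_p` on `Δ_p` is the zero `M`
of `m ↦ max_{Δ_p} (N - m D)`. By Gibbs' inequality `∑ ψ(q_i) ≤ -∑ q_i log r_i` (for `q`, `r`
of equal mass), this parametric maximum is attained at the Gibbs distribution `r_i ∝ 2^{-m i}`,
with value `φ(m) = (1 - p) log (L Z(m)) + ψ(p) + ψ(1 - p) - m p k log 2`, where
`Z(m) = ∑_{i=1}^k 2^{-m i}`. Since `φ` is continuous, `φ(0) ≥ 0` and `φ → -∞`, it has a
zero `M`; then `N ≤ M D` on `Δ_p`, with equality at the Gibbs distribution for `M`.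
-/

open MeasureTheory Filter Metric Set
open scoped ENNReal NNReal

/-- The simplex `Δ_p = {q : q_i ≥ 0, L·Σ_{i=1}^k q_i = 1 − p}` with `L = 2^d − 1`
(indices shifted: `q i` stands for `q_{i+1}`). -/
def simplexP (d k : ℕ) (p : ℝ) : Set (Fin k → ℝ) :=
  {q | (∀ i, 0 ≤ q i) ∧ ((2 : ℝ) ^ d - 1) * (∑ i, q i) = 1 - p}

/-- The objective function
`g_p(q) = (L·Σ ψ(q_i) + ψ(p)) / (L·Σ q_i·log(2^i) + p·log(2^k))`, `ψ(t) = t·log(1/t)`. -/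
noncomputable def gp (d k : ℕ) (p : ℝ) (q : Fin k → ℝ) : ℝ :=
  (((2 : ℝ) ^ d - 1) * (∑ i, Real.negMulLog (q i)) + Real.negMulLog p) /
    (((2 : ℝ) ^ d - 1) * (∑ i, q i * Real.log ((2 : ℝ) ^ ((i : ℕ) + 1)))
      + p * Real.log ((2 : ℝ) ^ k))

open Real Finset Topology

lemma negMulLog_add_mul_log_le_sub {q r : ℝ} (hq : 0 ≤ q) (hr : 0 < r) :
    negMulLog q + q * log r ≤ r - q := by
  have h := negMulLog_mul (q / r) r
  rw [div_mul_cancel₀ q hr.ne'] at h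
  have hle := mul_le_mul_of_nonneg_left (negMulLog_le_one_sub_self (div_nonneg hq hr.le)) hr.le
  have hqr : q / r * negMulLog r = -(q * log r) := by
    rw [negMulLog]
    field_simp
  rw [mul_one_sub, mul_div_cancel₀ _ hr.ne'] at hle
  linarith

theorem sum_negMulLog_add_mul_log_le_zero {ι : Type*} {s : Finset ι} {q r : ι → ℝ}
    (hq : ∀ i ∈ s, 0 ≤ q i) (hr : ∀ i ∈ s, 0 < r i)
    (hqr : ∑ i ∈ s, q i = ∑ i ∈ s, r i) :
    ∑ i ∈ s, (negMulLog (q i) + q i * log (r i)) ≤ 0 :=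
  calc ∑ i ∈ s, (negMulLog (q i) + q i * log (r i)) ≤ ∑ i ∈ s, (r i - q i) :=
        sum_le_sum fun i hi => negMulLog_add_mul_log_le_sub (hq i hi) (hr i hi)
    _ = 0 := by rw [sum_sub_distrib, hqr, sub_self]

theorem isGreatest_image_div_of_le_mul {α : Type*} {s : Set α} {f g : α → ℝ} {a : α}
    {M : ℝ} (ha : a ∈ s) (hfa : f a = M * g a) (hg : ∀ x ∈ s, 0 < g x)
    (hf : ∀ x ∈ s, f x ≤ M * g x) :
    IsGreatest ((fun x => f x / g x) '' s) M := by
  have hfga : f a / g a = M := by rw [hfa, mul_div_cancel_right₀ _ (hg a ha).ne']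
  refine ⟨⟨a, ha, hfga⟩, ?_⟩
  rintro _ ⟨x, hx, rfl⟩
  exact (div_le_iff₀ (hg x hx)).2 (hf x hx)

noncomputable def partitionFn (k : ℕ) (m : ℝ) : ℝ :=
  ∑ i : Fin k, (2 : ℝ) ^ (-(m * ((i : ℕ) + 1)))

noncomputable def gpNum (d k : ℕ) (p : ℝ) (q : Fin k → ℝ) : ℝ :=
  ((2 : ℝ) ^ d - 1) * (∑ i, negMulLog (q i)) + negMulLog p

noncomputable def gpDen (d k : ℕ) (p : ℝ) (q : Fin k → ℝ) : ℝ :=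
  ((2 : ℝ) ^ d - 1) * (∑ i, q i * log ((2 : ℝ) ^ ((i : ℕ) + 1))) + p * log ((2 : ℝ) ^ k)

noncomputable def gibbsNormalizer (d k : ℕ) (p m : ℝ) : ℝ :=
  (1 - p) / (((2 : ℝ) ^ d - 1) * partitionFn k m)

noncomputable def gibbsPoint (d k : ℕ) (p m : ℝ) : Fin k → ℝ :=
  fun i => gibbsNormalizer d k p m * (2 : ℝ) ^ (-(m * ((i : ℕ) + 1)))

noncomputable def parametricValue (d k : ℕ) (p m : ℝ) : ℝ :=
  (1 - p) * log (((2 : ℝ) ^ d - 1) * partitionFn k m) + negMulLog p + negMulLog (1 - p)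
    - m * p * k * log 2

section

variable {d k : ℕ} {p : ℝ}

lemma one_le_two_pow_sub_one (hd : 1 ≤ d) : (1 : ℝ) ≤ 2 ^ d - 1 := by
  have : (2 : ℝ) ≤ 2 ^ d := by simpa using pow_le_pow_right₀ one_le_two hd
  linarith

lemma two_pow_sub_one_pos (hd : 1 ≤ d) : (0 : ℝ) < 2 ^ d - 1 :=
  zero_lt_one.trans_le (one_le_two_pow_sub_one hd)

lemma partitionFn_pos (hk : 1 ≤ k) (m : ℝ) : 0 < partitionFn k m :=
  haveI : Nonempty (Fin k) := ⟨⟨0, hk⟩⟩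
  sum_pos (fun _ _ => rpow_pos_of_pos two_pos _) univ_nonempty

lemma partitionFn_zero : partitionFn k 0 = k := by simp [partitionFn]

lemma continuous_partitionFn : Continuous (partitionFn k) := by
  unfold partitionFn
  fun_prop (disch := norm_num)

lemma tendsto_partitionFn_atTop : Tendsto (partitionFn k) atTop (𝓝 0) := by
  unfold partitionFn
  have h := tendsto_finsetSum (univ : Finset (Fin k)) fun (i : Fin k) _ =>
    (tendsto_rpow_atBot_of_base_gt_one 2 one_lt_two).comp
      (tendsto_neg_atTop_atBot.comp (tendsto_id.atTop_mul_const (by positivity :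
        (0 : ℝ) < (i : ℕ) + 1)))
  simpa using h

lemma gibbsNormalizer_pos (hd : 1 ≤ d) (hk : 1 ≤ k) (hp : p < 1) (m : ℝ) :
    0 < gibbsNormalizer d k p m :=
  div_pos (sub_pos.2 hp) (mul_pos (two_pow_sub_one_pos hd) (partitionFn_pos hk m))

lemma gibbsPoint_pos (hd : 1 ≤ d) (hk : 1 ≤ k) (hp : p < 1) (m : ℝ) (i : Fin k) :
    0 < gibbsPoint d k p m i :=
  mul_pos (gibbsNormalizer_pos hd hk hp m) (rpow_pos_of_pos two_pos _)

lemma mem_simplexP_gibbsPoint (hd : 1 ≤ d) (hk : 1 ≤ k) (hp : p < 1) (m : ℝ) :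
    gibbsPoint d k p m ∈ simplexP d k p := by
  refine ⟨fun i => (gibbsPoint_pos hd hk hp m i).le, ?_⟩
  have := (two_pow_sub_one_pos hd).ne'
  have := (partitionFn_pos hk m).ne'
  simp only [gibbsPoint, gibbsNormalizer, ← mul_sum, partitionFn] at *
  field_simp

lemma log_gibbsPoint (hd : 1 ≤ d) (hk : 1 ≤ k) (hp : p < 1) (m : ℝ) (i : Fin k) :
    log (gibbsPoint d k p m i) =
      log (gibbsNormalizer d k p m) - m * log ((2 : ℝ) ^ ((i : ℕ) + 1)) := by
  rw [gibbsPoint, log_mul (gibbsNormalizer_pos hd hk hp m).ne' (rpow_pos_of_pos two_pos _).ne',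
    log_rpow two_pos, log_pow]
  push_cast
  ring

lemma gpNum_sub_mul_gpDen (hd : 1 ≤ d) (hk : 1 ≤ k) (hp : p < 1) (m : ℝ) {q : Fin k → ℝ}
    (hq : ((2 : ℝ) ^ d - 1) * (∑ i, q i) = 1 - p) :
    gpNum d k p q - m * gpDen d k p q =
      ((2 : ℝ) ^ d - 1) * ∑ i, (negMulLog (q i) + q i * log (gibbsPoint d k p m i))
        + parametricValue d k p m := by
  have hcross : ∑ i, q i * log (gibbsPoint d k p m i) =
      (∑ i, q i) * log (gibbsNormalizer d k p m)
        - m * ∑ i, q i * log ((2 : ℝ) ^ ((i : ℕ) + 1)) := by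
    rw [sum_mul, mul_sum, ← sum_sub_distrib]
    refine sum_congr rfl fun i _ => ?_
    rw [log_gibbsPoint hd hk hp]
    ring
  have hLZ := mul_ne_zero (two_pow_sub_one_pos hd).ne' (partitionFn_pos hk m).ne'
  rw [gpNum, gpDen, parametricValue, sum_add_distrib, hcross, gibbsNormalizer,
    log_div (sub_pos.2 hp).ne' hLZ, log_pow, negMulLog, negMulLog]
  linear_combination (log (((2 : ℝ) ^ d - 1) * partitionFn k m) - log (1 - p)) * hq

lemma gpNum_sub_mul_gpDen_le (hd : 1 ≤ d) (hk : 1 ≤ k) (hp : p < 1) (m : ℝ)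
    {q : Fin k → ℝ} (hq : q ∈ simplexP d k p) :
    gpNum d k p q - m * gpDen d k p q ≤ parametricValue d k p m := by
  have hL := two_pow_sub_one_pos hd
  have hsum : ∑ i, q i = ∑ i, gibbsPoint d k p m i :=
    mul_left_cancel₀ hL.ne' (hq.2.trans (mem_simplexP_gibbsPoint hd hk hp m).2.symm)
  have hgibbs := sum_negMulLog_add_mul_log_le_zero (fun i _ => hq.1 i)
    (fun i _ => gibbsPoint_pos hd hk hp m i) hsum
  rw [gpNum_sub_mul_gpDen hd hk hp m hq.2]
  linarith [mul_nonpos_of_nonneg_of_nonpos hL.le hgibbs]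

lemma gpNum_sub_mul_gpDen_gibbsPoint (hd : 1 ≤ d) (hk : 1 ≤ k) (hp : p < 1) (m : ℝ) :
    gpNum d k p (gibbsPoint d k p m) - m * gpDen d k p (gibbsPoint d k p m) =
      parametricValue d k p m := by
  rw [gpNum_sub_mul_gpDen hd hk hp m (mem_simplexP_gibbsPoint hd hk hp m).2]
  simp [negMulLog]

lemma gpDen_pos (hd : 1 ≤ d) (hp0 : 0 ≤ p) (hp1 : p < 1) {q : Fin k → ℝ}
    (hq : q ∈ simplexP d k p) : 0 < gpDen d k p q := by
  have hL := two_pow_sub_one_pos hd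
  have hlog : (∑ i, q i) * log 2 ≤ ∑ i, q i * log ((2 : ℝ) ^ ((i : ℕ) + 1)) := by
    rw [sum_mul]
    refine sum_le_sum fun i _ => mul_le_mul_of_nonneg_left ?_ (hq.1 i)
    exact log_le_log two_pos (by simpa using pow_le_pow_right₀ one_le_two (Nat.le_add_left 1 i))
  have hpk : 0 ≤ p * log ((2 : ℝ) ^ k) := mul_nonneg hp0 (log_nonneg (one_le_pow₀ one_le_two))
  have hmass : 0 < ((2 : ℝ) ^ d - 1) * (∑ i, q i) * log 2 := by
    rw [hq.2]
    exact mul_pos (sub_pos.2 hp1) (log_pos one_lt_two)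
  have := mul_le_mul_of_nonneg_left hlog hL.le
  rw [gpDen]
  linarith [mul_assoc ((2 : ℝ) ^ d - 1) (∑ i, q i) (log 2)]

lemma continuous_parametricValue (hd : 1 ≤ d) (hk : 1 ≤ k) :
    Continuous (parametricValue d k p) := by
  have hlog : Continuous fun m => log (((2 : ℝ) ^ d - 1) * partitionFn k m) :=
    (continuous_const.mul continuous_partitionFn).log
      fun m => (mul_pos (two_pow_sub_one_pos hd) (partitionFn_pos hk m)).ne'
  unfold parametricValue
  fun_prop

lemma parametricValue_zero_nonneg (hd : 1 ≤ d) (hk : 1 ≤ k) (hp0 : 0 ≤ p) (hp1 : p ≤ 1) :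
    0 ≤ parametricValue d k p 0 := by
  have hLk : 0 ≤ log (((2 : ℝ) ^ d - 1) * k) :=
    log_nonneg (one_le_mul_of_one_le_of_one_le (one_le_two_pow_sub_one hd) (mod_cast hk))
  have := mul_nonneg (sub_nonneg.2 hp1) hLk
  have := negMulLog_nonneg hp0 hp1
  have := negMulLog_nonneg (sub_nonneg.2 hp1) (sub_le_self 1 hp0)
  rw [parametricValue, partitionFn_zero]
  linarith

lemma tendsto_parametricValue_atTop (hd : 1 ≤ d) (hk : 1 ≤ k) (hp0 : 0 ≤ p) (hp1 : p < 1) :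
    Tendsto (parametricValue d k p) atTop atBot := by
  have hLZ : Tendsto (fun m => ((2 : ℝ) ^ d - 1) * partitionFn k m) atTop (𝓝[>] 0) :=
    tendsto_nhdsWithin_iff.2
      ⟨by simpa using tendsto_partitionFn_atTop.const_mul ((2 : ℝ) ^ d - 1),
        Eventually.of_forall fun m => mul_pos (two_pow_sub_one_pos hd) (partitionFn_pos hk m)⟩
  have hlog := tendsto_atBot_add_const_right _ (negMulLog p + negMulLog (1 - p))
    ((tendsto_log_nhdsGT_zero.comp hLZ).const_mul_atBot (sub_pos.2 hp1))
  refine tendsto_atBot_mono' _ ?_ hlog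
  filter_upwards [eventually_ge_atTop 0] with m hm
  have : 0 ≤ m * p * k * log 2 := by positivity
  simp only [parametricValue, Function.comp_apply]
  linarith

lemma exists_parametricValue_eq_zero (hd : 1 ≤ d) (hk : 1 ≤ k) (hp0 : 0 ≤ p) (hp1 : p < 1) :
    ∃ M, parametricValue d k p M = 0 := by
  obtain ⟨b, hb, hb0⟩ := (((tendsto_parametricValue_atTop hd hk hp0 hp1).eventually
    (eventually_le_atBot 0)).and (eventually_ge_atTop 0)).exists
  obtain ⟨M, -, hM⟩ := intermediate_value_Icc' hb0
    (continuous_parametricValue hd hk).continuousOn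
    ⟨hb, parametricValue_zero_nonneg hd hk hp0 hp1.le⟩
  exact ⟨M, hM⟩

end

/-- For `d, k ≥ 1` and `p ∈ [0, 2^{-k}]`, the global maximum `M` of `g_p`
on `Δ_p` is attained at the point `q_i = A·2^{-M·i}` (`i = 1,…,k`), where `A > 0` is
determined by the requirement that this point lies in `Δ_p`. -/
theorem isGreatest_gp_at_geometric_point (d k : ℕ) (hd : 1 ≤ d) (hk : 1 ≤ k)
    (p : ℝ) (hp0 : 0 ≤ p) (hp : p ≤ ((2 : ℝ) ^ k)⁻¹) :
    ∃ M A : ℝ, 0 < A ∧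
      IsGreatest (gp d k p '' simplexP d k p) M ∧
      (fun i : Fin k => A * (2 : ℝ) ^ (-(M * ((i : ℕ) + 1)))) ∈ simplexP d k p ∧
      gp d k p (fun i : Fin k => A * (2 : ℝ) ^ (-(M * ((i : ℕ) + 1)))) = M := by
  have hp1 : p < 1 := hp.trans_lt (inv_lt_one_of_one_lt₀ (one_lt_pow₀ one_lt_two (by omega)))
  obtain ⟨M, hM⟩ := exists_parametricValue_eq_zero hd hk hp0 hp1
  have hr := mem_simplexP_gibbsPoint hd hk hp1 M
  have hrM : gpNum d k p (gibbsPoint d k p M) = M * gpDen d k p (gibbsPoint d k p M) := by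
    linarith [gpNum_sub_mul_gpDen_gibbsPoint hd hk hp1 M]
  have hle : ∀ q ∈ simplexP d k p, gpNum d k p q ≤ M * gpDen d k p q := fun q hq => by
    linarith [gpNum_sub_mul_gpDen_le hd hk hp1 M hq]
  have hden : ∀ q ∈ simplexP d k p, 0 < gpDen d k p q := fun q hq => gpDen_pos hd hp0 hp1 hq
  exact ⟨M, gibbsNormalizer d k p M, gibbsNormalizer_pos hd hk hp1 M,
    isGreatest_image_div_of_le_mul hr hrM hden hle, hr, (div_eq_iff (hden _ hr).ne').2 hrM⟩
end
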